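/- For every smooth compactly supported function φ : ℝ³ → ℂ, the Hardy inequality holds: ∫_{ℝ³} |φ(x)|² / |x|² dx ≤ 4 ∫_{ℝ³} |∇φ(x)|² dx. -/

import Mathlib

open MeasureTheory Set Metric ENNReal intervalIntegral

/-- 1D Hardy-type inequality on `[0, R]`. -/
lemma hardy_1d_aux (g g' : ℝ → ℂ) (hg : ∀ r, HasDerivAt g (g' r) r)
    (hgc : Continuous g) (hg'c : Continuous g') (R : ℝ) (hR : 0 < R)
    (h0 : ∀ r, R ≤ r → g r = 0) :
    ∫ r in (0:ℝ)..R, ‖g r‖ ^ 2 ≤ 4 * ∫ r in (0:ℝ)..R, r ^ 2 * ‖g' r‖ ^ 2 := by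
  set A := ∫ r in (0:ℝ)..R, ‖g r‖ ^ 2 with hA
  set B := ∫ r in (0:ℝ)..R, r ^ 2 * ‖g' r‖ ^ 2 with hB
  have hderiv : ∀ r ∈ Set.uIcc (0:ℝ) R, HasDerivAt (fun r => r * ‖g r‖ ^ 2)
      (‖g r‖ ^ 2 + r * (2 * (inner ℝ (g r) (g' r) : ℝ))) r := by
    intro r _
    have h1 : HasDerivAt (fun r : ℝ => r) 1 r := hasDerivAt_id r
    have h2 : HasDerivAt (fun r => ‖g r‖ ^ 2) (2 * (inner ℝ (g r) (g' r) : ℝ)) r :=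
      (hg r).norm_sq
    simpa using h1.fun_mul h2
  have hinnerc : Continuous fun r => (inner ℝ (g r) (g' r) : ℝ) := hgc.inner hg'c
  have hcont : Continuous fun r => ‖g r‖ ^ 2 + r * (2 * (inner ℝ (g r) (g' r) : ℝ)) :=
    (by fun_prop : Continuous fun r => ‖g r‖ ^ 2).add
      (continuous_id.mul (continuous_const.mul hinnerc))
  have hftc : ∫ r in (0:ℝ)..R, (‖g r‖ ^ 2 + r * (2 * (inner ℝ (g r) (g' r) : ℝ)))
      = R * ‖g R‖ ^ 2 - 0 * ‖g 0‖ ^ 2 := by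
    exact integral_eq_sub_of_hasDerivAt hderiv (hcont.intervalIntegrable _ _)
  rw [h0 R le_rfl] at hftc
  simp only [norm_zero, zero_pow, mul_zero, zero_mul, sub_zero] at hftc
  have hint1 : IntervalIntegrable (fun r => ‖g r‖ ^ 2) volume 0 R :=
    (by fun_prop : Continuous fun r => ‖g r‖ ^ 2).intervalIntegrable _ _
  have hint2 : IntervalIntegrable (fun r => r * (2 * (inner ℝ (g r) (g' r) : ℝ))) volume 0 R :=
    (continuous_id.mul (continuous_const.mul hinnerc)).intervalIntegrable _ _
  rw [integral_add hint1 hint2] at hftc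
  have key : A = - ∫ r in (0:ℝ)..R, r * (2 * (inner ℝ (g r) (g' r) : ℝ)) := by
    rw [hA]; linarith [hftc]
  have hmono : (∫ r in (0:ℝ)..R, -(r * (2 * (inner ℝ (g r) (g' r) : ℝ))))
      ≤ ∫ r in (0:ℝ)..R, ((1/2) * ‖g r‖ ^ 2 + 2 * (r ^ 2 * ‖g' r‖ ^ 2)) := by
    apply integral_mono_on hR.le hint2.neg
    · exact ((by fun_prop : Continuous fun r =>
        ((1:ℝ)/2) * ‖g r‖ ^ 2 + 2 * (r ^ 2 * ‖g' r‖ ^ 2)).intervalIntegrable _ _)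
    · intro r hr
      simp only [Pi.neg_apply]
      have h1 : |(inner ℝ (g r) (g' r) : ℝ)| ≤ ‖g r‖ * ‖g' r‖ := abs_real_inner_le_norm _ _
      have hr0 : 0 ≤ r := hr.1
      have h2 : 0 ≤ ‖g r‖ := norm_nonneg _
      have h3 : 0 ≤ ‖g' r‖ := norm_nonneg _
      have h4 : -(inner ℝ (g r) (g' r) : ℝ) ≤ ‖g r‖ * ‖g' r‖ := by
        rw [abs_le] at h1; linarith [h1.1]
      nlinarith [sq_nonneg (‖g r‖ - 2 * (r * ‖g' r‖)), mul_nonneg hr0 h3]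
  rw [intervalIntegral.integral_neg] at hmono
  rw [integral_add ((by fun_prop : Continuous fun r => ((1:ℝ)/2) * ‖g r‖ ^ 2).intervalIntegrable _ _)
    ((by fun_prop : Continuous fun r => 2 * (r ^ 2 * ‖g' r‖ ^ 2)).intervalIntegrable _ _),
    intervalIntegral.integral_const_mul, intervalIntegral.integral_const_mul] at hmono
  rw [← hA, ← hB] at hmono
  linarith [key ▸ hmono]

/-- Polar-coordinates formula for lower integrals over a finite-dimensional normed space. -/
lemma lintegral_polar_aux {E : Type*} [NormedAddCommGroup E] [NormedSpace ℝ E]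
    [MeasurableSpace E] [BorelSpace E] [FiniteDimensional ℝ E] [Nontrivial E]
    (μ : Measure E) [μ.IsAddHaarMeasure] (f : E → ℝ≥0∞) (hf : Measurable f) :
    ∫⁻ x, f x ∂μ = ∫⁻ ω : sphere (0:E) 1, ∫⁻ r in Ioi (0:ℝ),
      ENNReal.ofReal (r ^ (Module.finrank ℝ E - 1)) * f (r • (ω : E)) ∂volume ∂μ.toSphere := by
  have hF : Measurable fun p : sphere (0:E) 1 × Ioi (0:ℝ) => f (p.2.1 • (p.1 : E)) :=
    hf.comp (by fun_prop)
  calc ∫⁻ x, f x ∂μ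
      = ∫⁻ x in ({0}ᶜ : Set E), f x ∂μ := by
        rw [MeasureTheory.restrict_compl_singleton]
    _ = ∫⁻ x : ({0}ᶜ : Set E), f x ∂(μ.comap (↑)) :=
        (lintegral_subtype_comap (measurableSet_singleton 0).compl f).symm
    _ = ∫⁻ x : ({0}ᶜ : Set E), (fun p : sphere (0:E) 1 × Ioi (0:ℝ) => f (p.2.1 • (p.1 : E)))
          (homeomorphUnitSphereProd E x) ∂(μ.comap (↑)) := by
        refine lintegral_congr fun x => ?_
        simp only [homeomorphUnitSphereProd_apply_snd_coe, homeomorphUnitSphereProd_apply_fst_coe]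
        rw [smul_inv_smul₀ (norm_ne_zero_iff.2 x.2)]
    _ = ∫⁻ p : sphere (0:E) 1 × Ioi (0:ℝ), f (p.2.1 • (p.1 : E))
          ∂(μ.toSphere.prod (.volumeIoiPow (Module.finrank ℝ E - 1))) :=
        (μ.measurePreserving_homeomorphUnitSphereProd).lintegral_comp hF
    _ = ∫⁻ ω : sphere (0:E) 1, ∫⁻ r : Ioi (0:ℝ), f (r.1 • (ω : E))
          ∂(Measure.volumeIoiPow (Module.finrank ℝ E - 1)) ∂μ.toSphere :=
        lintegral_prod _ hF.aemeasurable
    _ = _ := by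
        refine lintegral_congr fun ω => ?_
        have hg : Measurable fun r : Ioi (0:ℝ) => f (r.1 • (ω : E)) := hf.comp (by fun_prop)
        rw [Measure.volumeIoiPow, lintegral_withDensity_eq_lintegral_mul _ (by fun_prop) hg]
        simp only [Pi.mul_apply]
        exact lintegral_subtype_comap measurableSet_Ioi
          fun r => ENNReal.ofReal (r ^ (Module.finrank ℝ E - 1)) * f (r • (ω : E))

local notation "E" => EuclideanSpace ℝ (Fin 3)

/-- Classical Hardy inequality in dimension 3:
for smooth compactly supported `φ : ℝ³ → ℂ`,
`∫ |φ x|² / |x|² dx ≤ 4 ∫ |∇φ x|² dx`. -/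
theorem hardy_inequality_dim3
    (φ : EuclideanSpace ℝ (Fin 3) → ℂ)
    (hφ : ContDiff ℝ (⊤ : ℕ∞) φ) (hsupp : HasCompactSupport φ) :
    ∫ x : EuclideanSpace ℝ (Fin 3), ‖φ x‖ ^ 2 / ‖x‖ ^ 2
      ≤ 4 * ∫ x : EuclideanSpace ℝ (Fin 3), ‖fderiv ℝ φ x‖ ^ 2 := by
  set D := fderiv ℝ φ with hDdef
  have hφc : Continuous φ := hφ.continuous
  have hD : Continuous D := (hφ.fderiv_right (m := (⊤ : ℕ∞)) (by simp)).continuous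
  have hDsupp : HasCompactSupport D := hsupp.fderiv ℝ
  -- a radius beyond which φ vanishes
  obtain ⟨R₀, hR₀⟩ := hsupp.isCompact.isBounded.subset_closedBall (0:E)
  set R : ℝ := max R₀ 0 + 1 with hRdef
  have hR : (0:ℝ) < R := by positivity
  have hφR : ∀ x : E, R ≤ ‖x‖ → φ x = 0 := by
    intro x hx
    apply image_eq_zero_of_notMem_tsupport
    intro hmem
    have := hR₀ hmem
    rw [mem_closedBall_zero_iff] at this
    have h1 : R₀ ≤ max R₀ 0 := le_max_left _ _
    linarith
  -- the two lower integrals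
  set L : ℝ≥0∞ := ∫⁻ x : E, ENNReal.ofReal (‖φ x‖ ^ 2 / ‖x‖ ^ 2) with hLdef
  set Rl : ℝ≥0∞ := ∫⁻ x : E, ENNReal.ofReal (‖D x‖ ^ 2) with hRldef
  have hfmeas : Measurable fun x : E => ENNReal.ofReal (‖φ x‖ ^ 2 / ‖x‖ ^ 2) := by
    apply ENNReal.measurable_ofReal.comp
    exact ((hφc.norm.pow 2).measurable).div ((continuous_norm.pow 2).measurable)
  have hgmeas : Measurable fun x : E => ENNReal.ofReal (‖D x‖ ^ 2) := by fun_prop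
  -- integrability of the RHS
  have hDint : Integrable (fun x : E => ‖D x‖ ^ 2) volume := by
    have hDn : HasCompactSupport (fun x => ‖D x‖ ^ 2) := hDsupp.norm.comp_left (g := fun t : ℝ => t ^ 2) (by simp)
    exact (hD.norm.pow 2).integrable_of_hasCompactSupport hDn
  -- core estimate: L ≤ 4 * Rl
  have hfinrank : Module.finrank ℝ E - 1 = 2 := by
    simp [finrank_euclideanSpace]
  have core : L ≤ 4 * Rl := by
    rw [hLdef, hRldef, lintegral_polar_aux volume _ hfmeas, lintegral_polar_aux volume _ hgmeas,
      hfinrank]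
    rw [← lintegral_const_mul' 4 _ (by norm_num)]
    refine lintegral_mono fun ω => ?_
    have hω : ‖(ω : E)‖ = 1 := mem_sphere_zero_iff_norm.1 ω.2
    have hnorm : ∀ r : ℝ, 0 < r → ‖r • (ω : E)‖ = r := by
      intro r hr
      rw [norm_smul, hω, Real.norm_eq_abs, abs_of_pos hr, mul_one]
    -- set up the ray function
    set g : ℝ → ℂ := fun r => φ (r • (ω : E)) with hgdef
    set g' : ℝ → ℂ := fun r => D (r • (ω : E)) (ω : E) with hg'def
    have hgderiv : ∀ r : ℝ, HasDerivAt g (g' r) r := by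
      intro r
      have h1 : HasDerivAt (fun r : ℝ => r • (ω : E)) ((ω : E)) r := by
        simpa using (hasDerivAt_id r).smul_const (ω : E)
      have h2 := ((hφ.differentiable (by simp)) (r • (ω : E))).hasFDerivAt.comp_hasDerivAt r h1
      simpa [hgdef, hg'def, Function.comp_def, hDdef] using h2
    have hgc : Continuous g := hφc.comp (by fun_prop)
    have hg'c : Continuous g' := (hD.comp (by fun_prop : Continuous fun r : ℝ => r • (ω : E))).clm_apply continuous_const
    have hg0 : ∀ r, R ≤ r → g r = 0 := by
      intro r hr
      exact hφR _ (by rw [hnorm r (lt_of_lt_of_le hR hr)]; exact hr)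
    -- 1D Hardy plus operator-norm bound
    have h1d : ∫ r in (0:ℝ)..R, ‖g r‖ ^ 2 ≤ 4 * ∫ r in (0:ℝ)..R, r ^ 2 * ‖D (r • (ω : E))‖ ^ 2 := by
      refine (hardy_1d_aux g g' hgderiv hgc hg'c R hR hg0).trans ?_
      have : (∫ r in (0:ℝ)..R, r ^ 2 * ‖g' r‖ ^ 2)
          ≤ ∫ r in (0:ℝ)..R, r ^ 2 * ‖D (r • (ω : E))‖ ^ 2 := by
        apply integral_mono_on hR.le
          ((by fun_prop : Continuous fun r => r ^ 2 * ‖g' r‖ ^ 2).intervalIntegrable _ _)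
          ((by fun_prop : Continuous fun r => r ^ 2 * ‖D (r • (ω : E))‖ ^ 2).intervalIntegrable _ _)
        intro r _
        have hle : ‖g' r‖ ≤ ‖D (r • (ω : E))‖ := by
          simpa [hω] using (D (r • (ω : E))).le_opNorm (ω : E)
        have h2 : ‖g' r‖ ^ 2 ≤ ‖D (r • (ω : E))‖ ^ 2 :=
          pow_le_pow_left₀ (norm_nonneg _) hle 2
        nlinarith [sq_nonneg r]
      linarith
    -- rewrite both lintegrals
    have lhs_eq : (∫⁻ r in Ioi (0:ℝ),
        ENNReal.ofReal (r ^ 2) * ENNReal.ofReal (‖φ (r • (ω : E))‖ ^ 2 / ‖r • (ω : E)‖ ^ 2))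
        = ∫⁻ r in Ioi (0:ℝ), ENNReal.ofReal (‖g r‖ ^ 2) := by
      refine setLIntegral_congr_fun measurableSet_Ioi (fun r hr => ?_)
      rw [hnorm r (mem_Ioi.1 hr), ← ENNReal.ofReal_mul (by positivity),
        mul_div_cancel₀ _ (pow_ne_zero 2 (ne_of_gt (mem_Ioi.1 hr)))]
    have rhs_eq : (∫⁻ r in Ioi (0:ℝ),
        ENNReal.ofReal (r ^ 2) * ENNReal.ofReal (‖D (r • (ω : E))‖ ^ 2))
        = ∫⁻ r in Ioi (0:ℝ), ENNReal.ofReal (r ^ 2 * ‖D (r • (ω : E))‖ ^ 2) := by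
      refine setLIntegral_congr_fun measurableSet_Ioi (fun r hr => ?_)
      rw [← ENNReal.ofReal_mul (by positivity)]
    rw [lhs_eq, rhs_eq]
    -- now reduce to intervals
    have hIoi : Ioi (0:ℝ) = Ioc 0 R ∪ Ioi R := (Ioc_union_Ioi_eq_Ioi hR.le).symm
    have lhs_split : (∫⁻ r in Ioi (0:ℝ), ENNReal.ofReal (‖g r‖ ^ 2))
        = ∫⁻ r in Ioc (0:ℝ) R, ENNReal.ofReal (‖g r‖ ^ 2) := by
      rw [hIoi, lintegral_union measurableSet_Ioi Ioc_disjoint_Ioi_same]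
      have : (∫⁻ r in Ioi R, ENNReal.ofReal (‖g r‖ ^ 2)) = 0 := by
        have hz : ∀ᵐ r ∂(volume.restrict (Ioi R)), ENNReal.ofReal (‖g r‖ ^ 2) = 0 := by
          filter_upwards [ae_restrict_mem measurableSet_Ioi] with r hr
          simp [hg0 r (le_of_lt hr)]
        rw [lintegral_congr_ae hz, lintegral_zero]
      rw [this, add_zero]
    rw [lhs_split]
    have int_g : IntegrableOn (fun r => ‖g r‖ ^ 2) (Ioc (0:ℝ) R) volume :=
      (by fun_prop : Continuous fun r => ‖g r‖ ^ 2).integrableOn_Ioc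
    have int_D : IntegrableOn (fun r => r ^ 2 * ‖D (r • (ω : E))‖ ^ 2) (Ioc (0:ℝ) R) volume :=
      (by fun_prop : Continuous fun r => r ^ 2 * ‖D (r • (ω : E))‖ ^ 2).integrableOn_Ioc
    calc (∫⁻ r in Ioc (0:ℝ) R, ENNReal.ofReal (‖g r‖ ^ 2))
        = ENNReal.ofReal (∫ r in Ioc (0:ℝ) R, ‖g r‖ ^ 2) :=
          (ofReal_integral_eq_lintegral_ofReal int_g
            (ae_of_all _ fun r => by positivity)).symm
      _ = ENNReal.ofReal (∫ r in (0:ℝ)..R, ‖g r‖ ^ 2) := by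
          rw [intervalIntegral.integral_of_le hR.le]
      _ ≤ ENNReal.ofReal (4 * ∫ r in (0:ℝ)..R, r ^ 2 * ‖D (r • (ω : E))‖ ^ 2) :=
          ENNReal.ofReal_le_ofReal h1d
      _ = 4 * ENNReal.ofReal (∫ r in Ioc (0:ℝ) R, r ^ 2 * ‖D (r • (ω : E))‖ ^ 2) := by
          rw [intervalIntegral.integral_of_le hR.le, ENNReal.ofReal_mul (by norm_num)]
          norm_num
      _ = 4 * ∫⁻ r in Ioc (0:ℝ) R, ENNReal.ofReal (r ^ 2 * ‖D (r • (ω : E))‖ ^ 2) := by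
          rw [ofReal_integral_eq_lintegral_ofReal int_D (ae_of_all _ fun r => by positivity)]
      _ ≤ 4 * ∫⁻ r in Ioi (0:ℝ), ENNReal.ofReal (r ^ 2 * ‖D (r • (ω : E))‖ ^ 2) :=
          mul_le_mul_right (lintegral_mono_set Ioc_subset_Ioi_self) _
  -- convert the goal to lower integrals
  have hLeq : ∫ x : E, ‖φ x‖ ^ 2 / ‖x‖ ^ 2 = L.toReal := by
    rw [hLdef, integral_eq_lintegral_of_nonneg_ae (f := fun x : E => ‖φ x‖ ^ 2 / ‖x‖ ^ 2) (ae_of_all _ fun x => by positivity)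
      (((hφc.norm.pow 2).measurable.div
        ((continuous_norm.pow 2).measurable)).aestronglyMeasurable)]
  have hReq : ∫ x : E, ‖D x‖ ^ 2 = Rl.toReal := by
    rw [hRldef, integral_eq_lintegral_of_nonneg_ae (f := fun x : E => ‖D x‖ ^ 2) (ae_of_all _ fun x => by positivity)
      (hD.norm.pow 2).measurable.aestronglyMeasurable]
  have hRl_fin : Rl ≠ ∞ := hDint.lintegral_lt_top.ne
  have h4Rl_fin : (4 : ℝ≥0∞) * Rl ≠ ∞ := ENNReal.mul_ne_top (by norm_num) hRl_fin
  rw [hLeq, hReq]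
  calc L.toReal ≤ ((4 : ℝ≥0∞) * Rl).toReal := ENNReal.toReal_mono h4Rl_fin core
    _ = 4 * Rl.toReal := by rw [ENNReal.toReal_mul]; norm_num
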